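/- arXiv:quant-ph/0411204 — 2 statements merged into one kernel-verified Lean document; each statement's English description precedes it below -/
import Mathlib

section
/- Let σ > 0, and let N, M be reals with N ≥ 2 and N^{10} ≤ M. Let β > 0 and m* = ⌈(log M − 10 log N)/log(1/β)⌉ with 0 < β < 1. Then ∑_{k=0}^{m*} √(N log N / (10 log N + k·log(1/β))) ≤ (∑_{k=1}^{⌈log(log M/log N)⌉} (2^k log N / log(1/β))·(1/√(2^k log N)))·C ≤ C'·√(N log N · log M)/log(1/β) for suitable absolute constants C, C' (e.g., C' = 4/(√2 − 1)). -/
/-!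
With `a = 10 log N` and `L = log (1/β)`, the `k`-th term is `√(N log N) / √(a + kL)`, and
`1/√(a + kL)` is at most the integral of the decreasing `x ↦ 1/√(a + xL)` over `[k-1, k]`,
namely `(2/L)(√(a + kL) - √(a + (k-1)L))`. The sum therefore telescopes to at most
`(2/L) √(a + m* L)`, and by the choice of `m*`, `a + m* L ≤ log M + L ≤ 2 log M`
because `β ≥ 1/N` makes `L ≤ log N`.
-/

open Real Finset

lemma inv_sqrt_le_two_div_mul_sub_sqrt {x L : ℝ} (hL : 0 < L) (hLx : L ≤ x) :
    1 / √x ≤ 2 / L * (√x - √(x - L)) := by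
  have hs : 0 < √x := sqrt_pos.2 (hL.trans_le hLx)
  have ht : 0 ≤ √(x - L) := sqrt_nonneg _
  have hs2 : √x ^ 2 = x := sq_sqrt (hL.le.trans hLx)
  have ht2 : √(x - L) ^ 2 = x - L := sq_sqrt (by linarith)
  rw [div_le_iff₀ hs, div_mul_eq_mul_div, div_mul_eq_mul_div, le_div_iff₀ hL]
  nlinarith [sq_nonneg (√x - √(x - L))]

lemma sum_range_inv_sqrt_le_sub {a L : ℝ} (hL : 0 < L) (hLa : L ≤ a) (n : ℕ) :
    ∑ k ∈ range (n + 1), 1 / √(a + k * L) ≤ 2 / L * (√(a + n * L) - √(a - L)) := by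
  induction n with
  | zero => simpa using inv_sqrt_le_two_div_mul_sub_sqrt hL hLa
  | succ n ih =>
    have hstep := inv_sqrt_le_two_div_mul_sub_sqrt (x := a + (n + 1) * L) hL
      (by nlinarith [n.cast_nonneg (α := ℝ)])
    rw [show a + (n + 1) * L - L = a + n * L by ring] at hstep
    rw [sum_range_succ]
    push_cast
    linarith

lemma sum_range_inv_sqrt_le {a L : ℝ} (hL : 0 < L) (hLa : L ≤ a) (n : ℕ) :
    ∑ k ∈ range (n + 1), 1 / √(a + k * L) ≤ 2 / L * √(a + n * L) :=
  (sum_range_inv_sqrt_le_sub hL hLa n).trans <|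
    mul_le_mul_of_nonneg_left (sub_le_self _ (sqrt_nonneg _)) (by positivity)

lemma natCeil_div_mul_le {x L : ℝ} (hx : 0 ≤ x) (hL : 0 < L) : ⌈x / L⌉₊ * L ≤ x + L :=
  calc (⌈x / L⌉₊ : ℝ) * L ≤ (x / L + 1) * L := by
        gcongr; exact (Nat.ceil_lt_add_one (div_nonneg hx hL.le)).le
    _ = x + L := by field_simp

lemma two_mul_sqrt_two_le : 2 * √2 ≤ 4 / (√2 - 1) := by
  have hs2 : √2 ^ 2 = 2 := sq_sqrt (by norm_num)
  have hs2lb : 1 < √2 := by nlinarith [sqrt_nonneg 2]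
  rw [le_div_iff₀ (by linarith)]
  nlinarith

/-- The dyadic-decomposition sum bound of Lemma 5: for `N ≥ 2`, `M ≥ N^10`,
`0 < β < 1` with `β ≥ 1/N` (as for the β used in ROIPL), and
`m* = ⌈(log M - 10 log N)/log(1/β)⌉`,
`∑_{k=0}^{m*} √(N log N/(10 log N + k log(1/β))) ≤ C'·√(N log N log M)/log(1/β)`
with the absolute constant `C' = 4/(√2 - 1)`. -/
theorem stmt10 (N M β : ℝ) (hN : 2 ≤ N) (hM : N ^ 10 ≤ M)
    (hβ0 : 0 < β) (hβ1 : β < 1) (hβ2 : 1 / N ≤ β) :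
    ∑ k ∈ Finset.range
        (⌈(Real.log M - 10 * Real.log N) / Real.log (1 / β)⌉₊ + 1),
      Real.sqrt (N * Real.log N / (10 * Real.log N + k * Real.log (1 / β)))
      ≤ (4 / (Real.sqrt 2 - 1)) * Real.sqrt (N * Real.log N * Real.log M)
          / Real.log (1 / β) := by
  set A := log N
  set L := log (1 / β)
  set m := ⌈(log M - 10 * A) / L⌉₊
  have hA : 0 < A := log_pos (by linarith)
  have hL : 0 < L := log_pos (one_lt_one_div hβ0 hβ1)
  have hLA : L ≤ A := log_le_log (by positivity) ((one_div_le (by linarith) hβ0).1 hβ2)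
  have hAM : 10 * A ≤ log M := by simpa using log_le_log (by positivity) hM
  have hm : 10 * A + m * L ≤ 2 * log M := by
    linarith [natCeil_div_mul_le (sub_nonneg.2 hAM) hL]
  calc ∑ k ∈ range (m + 1), √(N * A / (10 * A + k * L))
      = √(N * A) * ∑ k ∈ range (m + 1), 1 / √(10 * A + k * L) := by
        rw [mul_sum]
        refine sum_congr rfl fun k _ => ?_
        rw [sqrt_div (by positivity), mul_one_div]
    _ ≤ √(N * A) * (2 / L * √(2 * log M)) := by
        gcongr
        exact (sum_range_inv_sqrt_le hL (by linarith) m).trans (by gcongr)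
    _ = 2 * √2 * √(N * A * log M) / L := by
        rw [sqrt_mul (x := N * A) (by positivity), sqrt_mul zero_le_two]
        field_simp
    _ ≤ 4 / (√2 - 1) * √(N * A * log M) / L := by
        gcongr
        exact two_mul_sqrt_two_le
end

section
/- Let W: ℕ → ℝ satisfy W(s) ≤ max(W(1), ..., W(⌊s/2⌋)) + c/√(log₂ s) for all s with s ≥ 2, and W(1) = 0, where c > 0. Then W(M) ≤ c·∑_{j=1}^{⌈log₂ M⌉} 1/√j ≤ 2c·√(log₂ M) for all M ≥ 2. -/
/-!
Each application of the recurrence at least halves the argument, so `⌊log₂⌋` drops by at least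
one per step while the step costs at most `c / √⌊log₂ s⌋`. Unrolling from `M` therefore costs
at most `c ∑_{j ≤ ⌊log₂ M⌋} 1/√j`, and this sum telescopes against `2√j - 2√(j-1) ≥ 1/√j`.
-/

open Finset Real

noncomputable def invSqrtSum (n : ℕ) : ℝ := ∑ j ∈ Icc 1 n, 1 / √j

lemma invSqrtSum_succ (n : ℕ) : invSqrtSum (n + 1) = invSqrtSum n + 1 / √(n + 1 : ℕ) :=
  sum_Icc_succ_top (by omega) _

lemma invSqrtSum_mono : Monotone invSqrtSum := fun _ _ hmn ↦
  sum_le_sum_of_subset_of_nonneg (Icc_subset_Icc_right hmn) fun _ _ _ ↦ by positivity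

lemma one_div_sqrt_succ_le (x : ℝ) (hx : 0 ≤ x) : 1 / √(x + 1) ≤ 2 * √(x + 1) - 2 * √x := by
  have hpos : 0 < √(x + 1) := sqrt_pos.mpr (by linarith)
  have hsq : √(x + 1) ^ 2 = x + 1 := sq_sqrt (by linarith)
  have hsq' : √x ^ 2 = x := sq_sqrt hx
  rw [div_le_iff₀ hpos]
  nlinarith [sq_nonneg (√(x + 1) - √x), sqrt_nonneg x]

lemma invSqrtSum_le_two_mul_sqrt (n : ℕ) : invSqrtSum n ≤ 2 * √n := by
  induction n with
  | zero => simp [invSqrtSum]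
  | succ n ih =>
    rw [invSqrtSum_succ]
    push_cast
    linarith [one_div_sqrt_succ_le n n.cast_nonneg]

lemma one_div_sqrt_logb_two_le {s : ℕ} (hs : 2 ≤ s) : 1 / √(logb 2 s) ≤ 1 / √(Nat.log 2 s) := by
  have hlog : (0 : ℝ) < Nat.log 2 s := mod_cast Nat.log_pos one_lt_two hs
  gcongr
  exact_mod_cast natLog_le_logb s 2

theorem le_add_mul_invSqrtSum_log_two {c : ℝ} (hc : 0 ≤ c) {W : ℕ → ℝ}
    (hrec : ∀ s : ℕ, 2 ≤ s → ∃ i : ℕ, 1 ≤ i ∧ i ≤ s / 2 ∧ W s ≤ W i + c / √(logb 2 s))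
    {M : ℕ} (hM : 1 ≤ M) : W M ≤ W 1 + c * invSqrtSum (Nat.log 2 M) := by
  induction M using Nat.strong_induction_on with
  | _ M ih =>
    obtain rfl | hM2 : M = 1 ∨ 2 ≤ M := by omega
    · simp [invSqrtSum]
    obtain ⟨i, hi1, hiM, hWi⟩ := hrec M hM2
    obtain ⟨k, hk⟩ : ∃ k, Nat.log 2 M = k + 1 :=
      Nat.exists_eq_add_one.mpr (Nat.log_pos one_lt_two hM2)
    have hik : Nat.log 2 i ≤ k := by
      have := Nat.log_mono_right (b := 2) hiM
      rw [Nat.log_div_base] at this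
      omega
    calc W M ≤ W i + c * (1 / √(logb 2 M)) := by rwa [← div_eq_mul_one_div]
      _ ≤ W 1 + c * invSqrtSum k + c * (1 / √(k + 1 : ℕ)) := by
        rw [← hk]
        gcongr ?_ + c * ?_
        · exact (ih i (by omega) hi1).trans (by gcongr; exact invSqrtSum_mono hik)
        · exact one_div_sqrt_logb_two_le hM2
      _ = W 1 + c * invSqrtSum (Nat.log 2 M) := by rw [hk, invSqrtSum_succ]; ring

/-- If `W : ℕ → ℝ` satisfies `W 1 = 0` and, for every `s ≥ 2`,
`W s ≤ max(W 1, …, W ⌊s/2⌋) + c/√(log₂ s)` (equivalently, `W s ≤ W i + c/√(log₂ s)`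
for some `1 ≤ i ≤ ⌊s/2⌋`), then `W M ≤ c ∑_{j=1}^{⌈log₂ M⌉} 1/√j ≤ 2c√(log₂ M)`
for all `M ≥ 2`. -/
theorem stmt11 (c : ℝ) (hc : 0 < c) (W : ℕ → ℝ) (hW1 : W 1 = 0)
    (hrec : ∀ s : ℕ, 2 ≤ s → ∃ i : ℕ, 1 ≤ i ∧ i ≤ s / 2 ∧
      W s ≤ W i + c / Real.sqrt (Real.logb 2 s)) :
    ∀ M : ℕ, 2 ≤ M →
      W M ≤ c * ∑ j ∈ Finset.Icc 1 ⌈Real.logb 2 M⌉₊, 1 / Real.sqrt j ∧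
      W M ≤ 2 * c * Real.sqrt (Real.logb 2 M) := by
  intro M hM
  have hW : W M ≤ c * invSqrtSum (Nat.log 2 M) := by
    simpa [hW1] using le_add_mul_invSqrtSum_log_two hc.le hrec (M := M) (by omega)
  have hfloor : Nat.log 2 M = ⌊logb 2 M⌋₊ := by exact_mod_cast (natFloor_logb_natCast 2 M).symm
  constructor
  · refine hW.trans (mul_le_mul_of_nonneg_left (invSqrtSum_mono ?_) hc.le)
    exact hfloor ▸ Nat.floor_le_ceil _
  · calc W M ≤ c * (2 * √(Nat.log 2 M)) :=
        hW.trans (mul_le_mul_of_nonneg_left (invSqrtSum_le_two_mul_sqrt _) hc.le)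
      _ ≤ 2 * c * √(logb 2 M) := by
        rw [← mul_assoc, mul_comm c]
        gcongr
        exact_mod_cast natLog_le_logb M 2
end
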